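/- Let k ≥ 1 and let A, B, C be finite k-potent commutative integral residuated lattices, with A nontrivial and well-connected (equivalently, subdirectly irreducible). Let f : B → C be a surjective map preserving ·, ∧, ∨, →, and 1, and let h : A → C be an injective map preserving ·, ∨, and 1. Then there exists an injective map g : A → B preserving ·, ∨, and 1 such that f ∘ g = h. -/

import Mathlib

/-!
Let `e` be the product of the (finite) fibre `f⁻¹(1)`. It is the least element of that fibre, hence
idempotent, and since `f x = f y` forces `f (x ⇨ y) = 1`, i.e. `e ≤ x ⇨ y`, the element `e * x` depends
only on `f x`. So `c ↦ e * s c`, for any section `s` of `f`, preserves `·` and `∨` and is again a section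
of `f`. Composing it with `h` and resetting the value at `1` to `1` gives `g`: the reset is harmless for
`·` because `a * b = 1` forces `a = b = 1` in an integral lattice, and for `∨` because `A` is
well-connected.
-/

/-- A commutative integral residuated lattice. -/
class CIRL (α : Type*) extends CommMonoid α, Lattice α, HImp α where
  residuation : ∀ x y z : α, x * y ≤ z ↔ y ≤ x ⇨ z
  le_one : ∀ x : α, x ≤ 1

open Function

namespace CIRL

section Basic

variable {α : Type*} [CIRL α]

instance toIsOrderedMonoid : IsOrderedMonoid α where
  mul_le_mul_left a b hab c := by
    rw [mul_comm a, mul_comm b]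
    exact (residuation c a (c * b)).2 (hab.trans ((residuation c b _).1 le_rfl))

lemma mul_le_left (x y : α) : x * y ≤ x := mul_le_of_le_one_right' (le_one y)

lemma eq_one_of_mul_eq_one_left {x y : α} (hxy : x * y = 1) : x = 1 :=
  le_antisymm (le_one x) (hxy ▸ mul_le_left x y)

lemma himp_self_eq_one (x : α) : x ⇨ x = 1 :=
  le_antisymm (le_one _) ((residuation x 1 x).1 (mul_one x).le)

lemma mul_sup (x y z : α) : x * (y ⊔ z) = x * y ⊔ x * z :=
  le_antisymm
    ((residuation x _ _).2
      (sup_le ((residuation x y _).1 le_sup_left) ((residuation x z _).1 le_sup_right)))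
    (sup_le (mul_le_mul_right le_sup_left x) (mul_le_mul_right le_sup_right x))

end Basic

section Fibre

variable {B C : Type*} [CIRL B] [CIRL C]

noncomputable def fiberOneProd (f : B → C) : B := ∏ᶠ x ∈ f ⁻¹' {1}, x

variable [Finite B] (f : B →* C)

lemma map_fiberOneProd : f (fiberOneProd f) = 1 := by
  rw [fiberOneProd, MonoidHom.map_finprod_mem _ f (Set.toFinite _)]
  exact finprod_mem_of_eqOn_one fun _ hx => hx

lemma fiberOneProd_le {x : B} (hx : f x = 1) : fiberOneProd f ≤ x := by
  have hfib : insert x (f ⁻¹' {1} \ {x}) = f ⁻¹' {1} := by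
    rw [Set.insert_sdiff_singleton, Set.insert_eq_of_mem (show x ∈ f ⁻¹' {1} from hx)]
  rw [fiberOneProd, ← hfib, finprod_mem_insert _ (fun h => h.2 rfl) (Set.toFinite _)]
  exact mul_le_left _ _

lemma fiberOneProd_mul_self : fiberOneProd f * fiberOneProd f = fiberOneProd f :=
  le_antisymm (mul_le_left _ _)
    (fiberOneProd_le f (by rw [map_mul, map_fiberOneProd, mul_one]))

variable {f}

lemma fiberOneProd_mul_eq_of_map_eq (hf : ∀ a b, f (a ⇨ b) = f a ⇨ f b) {x y : B}
    (hxy : f x = f y) : fiberOneProd f * x = fiberOneProd f * y := by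
  have key : ∀ u v : B, f u = f v → fiberOneProd f * u ≤ fiberOneProd f * v := by
    intro x y hxy
    have hle : fiberOneProd f ≤ x ⇨ y :=
      fiberOneProd_le f (by rw [hf, hxy, himp_self_eq_one])
    have hmul : fiberOneProd f * x ≤ y := by
      rw [mul_comm]; exact (residuation x _ y).2 hle
    calc fiberOneProd f * x = fiberOneProd f * (fiberOneProd f * x) := by
          rw [← mul_assoc, fiberOneProd_mul_self]
      _ ≤ fiberOneProd f * y := mul_le_mul_right hmul _
  exact le_antisymm (key x y hxy) (key y x hxy.symm)

noncomputable def fiberSection (hsurj : Surjective f) (c : C) : B :=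
  fiberOneProd f * surjInv hsurj c

variable (hsurj : Surjective f)

lemma map_fiberSection (c : C) : f (fiberSection hsurj c) = c := by
  rw [fiberSection, map_mul, map_fiberOneProd, one_mul, surjInv_eq hsurj]

lemma fiberSection_mul (hf : ∀ a b, f (a ⇨ b) = f a ⇨ f b) (c d : C) :
    fiberSection hsurj (c * d) = fiberSection hsurj c * fiberSection hsurj d := by
  have hfib : f (surjInv hsurj (c * d)) = f (surjInv hsurj c * surjInv hsurj d) := by
    rw [map_mul, surjInv_eq hsurj, surjInv_eq hsurj, surjInv_eq hsurj]
  rw [fiberSection, fiberSection, fiberSection, fiberOneProd_mul_eq_of_map_eq hf hfib,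
    mul_mul_mul_comm, fiberOneProd_mul_self]

lemma fiberSection_sup (hf : ∀ a b, f (a ⇨ b) = f a ⇨ f b)
    (hfsup : ∀ a b, f (a ⊔ b) = f a ⊔ f b) (c d : C) :
    fiberSection hsurj (c ⊔ d) = fiberSection hsurj c ⊔ fiberSection hsurj d := by
  have hfib : f (surjInv hsurj (c ⊔ d)) = f (surjInv hsurj c ⊔ surjInv hsurj d) := by
    rw [hfsup, surjInv_eq hsurj, surjInv_eq hsurj, surjInv_eq hsurj]
  rw [fiberSection, fiberSection, fiberSection, fiberOneProd_mul_eq_of_map_eq hf hfib, mul_sup]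

end Fibre

section UpdateOne

variable {A B : Type*} [CIRL A] [CIRL B] [DecidableEq A] {τ : A → B}

lemma update_one_mul (hτ : ∀ a b, τ (a * b) = τ a * τ b) (a b : A) :
    update τ 1 1 (a * b) = update τ 1 1 a * update τ 1 1 b := by
  rcases eq_or_ne a 1 with rfl | ha
  · simp
  rcases eq_or_ne b 1 with rfl | hb
  · simp
  have hab : a * b ≠ 1 := fun hab => ha (eq_one_of_mul_eq_one_left hab)
  rw [update_of_ne ha, update_of_ne hb, update_of_ne hab, hτ]

lemma update_one_sup (hA : ∀ x y : A, x ⊔ y = 1 → x = 1 ∨ y = 1)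
    (hτ : ∀ a b, τ (a ⊔ b) = τ a ⊔ τ b) (a b : A) :
    update τ 1 1 (a ⊔ b) = update τ 1 1 a ⊔ update τ 1 1 b := by
  rcases eq_or_ne a 1 with rfl | ha
  · simp [sup_of_le_left (le_one _)]
  rcases eq_or_ne b 1 with rfl | hb
  · simp [sup_of_le_right (le_one _)]
  have hab : a ⊔ b ≠ 1 := fun hab => (hA a b hab).elim ha hb
  rw [update_of_ne ha, update_of_ne hb, update_of_ne hab, hτ]

end UpdateOne

end CIRL

open CIRL

theorem stmt11_general {A B C : Type*} [CIRL A] [CIRL B] [CIRL C]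
    [Finite B]
    (hwc : ∀ x y : A, x ⊔ y = 1 → x = 1 ∨ y = 1)
    (f : B → C) (hfsurj : Function.Surjective f)
    (hfmul : ∀ a b : B, f (a * b) = f a * f b)
    (hfsup : ∀ a b : B, f (a ⊔ b) = f a ⊔ f b)
    (hfhimp : ∀ a b : B, f (a ⇨ b) = f a ⇨ f b)
    (hfone : f 1 = 1)
    (h : A → C) (hinj : Function.Injective h)
    (hhmul : ∀ a b : A, h (a * b) = h a * h b)
    (hhsup : ∀ a b : A, h (a ⊔ b) = h a ⊔ h b)
    (hhone : h 1 = 1) :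
    ∃ g : A → B, Function.Injective g ∧
      (∀ a b : A, g (a * b) = g a * g b) ∧
      (∀ a b : A, g (a ⊔ b) = g a ⊔ g b) ∧
      g 1 = 1 ∧ f ∘ g = h := by
  classical
  let F : B →* C := ⟨⟨f, hfone⟩, hfmul⟩
  let σ := fiberSection (f := F) hfsurj
  have hlift : f ∘ update (σ ∘ h) 1 1 = h := by
    funext a
    rcases eq_or_ne a 1 with rfl | ha
    · simp [hfone, hhone]
    · rw [comp_apply, update_of_ne ha]
      exact map_fiberSection (f := F) hfsurj (h a)
  refine ⟨update (σ ∘ h) 1 1, (hlift ▸ hinj).of_comp, update_one_mul ?_, update_one_sup hwc ?_,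
    update_self _ _ _, hlift⟩
  · intro a b
    simp only [comp_apply, hhmul, σ, fiberSection_mul (f := F) hfsurj hfhimp]
  · intro a b
    simp only [comp_apply, hhsup, σ, fiberSection_sup (f := F) hfsurj hfhimp hfsup]

theorem stmt11 {A B C : Type*} [CIRL A] [CIRL B] [CIRL C]
    [Finite A] [Finite B] [Finite C]
    (k : ℕ) (hk : 1 ≤ k)
    (hpotA : ∀ x : A, x ^ (k + 1) = x ^ k)
    (hpotB : ∀ x : B, x ^ (k + 1) = x ^ k)
    (hpotC : ∀ x : C, x ^ (k + 1) = x ^ k)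
    (hA : Nontrivial A) (hwc : ∀ x y : A, x ⊔ y = 1 → x = 1 ∨ y = 1)
    (f : B → C) (hfsurj : Function.Surjective f)
    (hfmul : ∀ a b : B, f (a * b) = f a * f b)
    (hfinf : ∀ a b : B, f (a ⊓ b) = f a ⊓ f b)
    (hfsup : ∀ a b : B, f (a ⊔ b) = f a ⊔ f b)
    (hfhimp : ∀ a b : B, f (a ⇨ b) = f a ⇨ f b)
    (hfone : f 1 = 1)
    (h : A → C) (hinj : Function.Injective h)
    (hhmul : ∀ a b : A, h (a * b) = h a * h b)
    (hhsup : ∀ a b : A, h (a ⊔ b) = h a ⊔ h b)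
    (hhone : h 1 = 1) :
    ∃ g : A → B, Function.Injective g ∧
      (∀ a b : A, g (a * b) = g a * g b) ∧
      (∀ a b : A, g (a ⊔ b) = g a ⊔ g b) ∧
      g 1 = 1 ∧ f ∘ g = h :=
  stmt11_general hwc f hfsurj hfmul hfsup hfhimp hfone h hinj hhmul hhsup hhone
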